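/- Let (X, 𝔄, d) be a C*-algebra valued metric space over a unital C*-algebra 𝔄, and let T : X → X satisfy d(Tx, Ty) ⪯ A · (d(x,Tx) + d(y,Ty)) for all x,y ∈ X, where A is a positive element of 𝔄 commuting with every element of 𝔄 and ‖A‖ < 1/2. Then T is orbitally continuous on X: for every u, x₀ ∈ X and every strictly increasing sequence (nᵢ) of naturals, if ‖d(T^{nᵢ}x₀, u)‖ → 0 then ‖d(T^{nᵢ+1}x₀, Tu)‖ → 0. -/
import Mathlib


open Filter Topology Function

/-- A C*-algebra valued metric space: `d : X × X → A` into a unital C*-algebra `A`. -/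
structure CStarMetric (X : Type*) (A : Type*) [NormedRing A] [StarRing A] [PartialOrder A] where
  d : X → X → A
  nonneg : ∀ x y, 0 ≤ d x y
  eq_zero_iff : ∀ x y, d x y = 0 ↔ x = y
  symm : ∀ x y, d x y = d y x
  triangle : ∀ x y z, d x y ≤ d x z + d z y

variable {X A : Type*} [NormedRing A] [StarRing A] [CStarRing A] [PartialOrder A]
  [StarOrderedRing A] [CompleteSpace A] [NormedAlgebra ℂ A]

/-- A sequence converges to `x` when `‖d (s n) x‖ → 0`. -/
def CStarConverges (M : CStarMetric X A) (s : ℕ → X) (x : X) : Prop :=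
  Tendsto (fun n => ‖M.d (s n) x‖) atTop (𝓝 (0 : ℝ))

/-- Cauchy sequence: `‖d (s n) (s m)‖ → 0` as `n, m → ∞`. -/
def CStarCauchy (M : CStarMetric X A) (s : ℕ → X) : Prop :=
  ∀ ε : ℝ, 0 < ε → ∃ N : ℕ, ∀ n m : ℕ, N ≤ n → N ≤ m → ‖M.d (s n) (s m)‖ < ε

/-- Completeness: every Cauchy sequence converges. -/
def CStarComplete (M : CStarMetric X A) : Prop :=
  ∀ s : ℕ → X, CStarCauchy M s → ∃ x, CStarConverges M s x

/-- Orbital continuity of `T` at `u`. -/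
def OrbContAt (M : CStarMetric X A) (T : X → X) (u : X) : Prop :=
  ∀ (x : X) (k : ℕ → ℕ), StrictMono k →
    Tendsto (fun i => ‖M.d (T^[k i] x) u‖) atTop (𝓝 (0 : ℝ)) →
    Tendsto (fun i => ‖M.d (T^[k i + 1] x) (T u)‖) atTop (𝓝 (0 : ℝ))

/-- Orbital continuity of `T` on `X`. -/
def OrbCont (M : CStarMetric X A) (T : X → X) : Prop :=
  ∀ u, OrbContAt M T u

/-- Ćirić-type1 contractive mapping. -/
def CiricType1 (M : CStarMetric X A) (T : X → X) : Prop :=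
  ∃ q δ : X → X → A, (∀ x y, ‖q x y‖ < 1) ∧ (∀ x y, 0 ≤ δ x y) ∧
    ∀ x y : X, ∀ n : ℕ, 1 ≤ n →
      M.d (T^[n] x) (T^[n] y) ≤ star (q x y) ^ n * δ x y * q x y ^ n

/-- Ćirić-type2 contractive mapping: `q` takes values in the central positive elements. -/
def CiricType2 (M : CStarMetric X A) (T : X → X) : Prop :=
  ∃ q δ : X → X → A,
    (∀ x y, 0 ≤ q x y ∧ (∀ b : A, q x y * b = b * q x y) ∧ ‖q x y‖ < 1) ∧
    (∀ x y, 0 ≤ δ x y) ∧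
    ∀ x y : X, ∀ n : ℕ, 1 ≤ n → M.d (T^[n] x) (T^[n] y) ≤ q x y ^ n * δ x y

lemma star_real_smul_one (r : ℝ) : star (r • (1:A)) = r • (1:A) := by
  have hq : ∀ q : ℚ, star ((q:ℝ) • (1:A)) = (q:ℝ) • (1:A) := by
    intro q
    have hden : ((q.den : ℝ)) ≠ 0 := by exact_mod_cast q.den_nz
    have hmul : ((q.den : ℝ)) * (q:ℝ) = (q.num : ℝ) := by
      rw [Rat.cast_def]; field_simp
    apply smul_right_injective A hden
    calc (q.den : ℝ) • star ((q:ℝ) • (1:A))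
        = star ((q.den : ℝ) • ((q:ℝ) • (1:A))) := by
          rw [Nat.cast_smul_eq_nsmul ℝ, Nat.cast_smul_eq_nsmul ℝ, star_nsmul]
      _ = star ((q.num : ℝ) • (1:A)) := by rw [smul_smul, hmul]
      _ = (q.num : ℝ) • (1:A) := by
          rw [Int.cast_smul_eq_zsmul ℝ, star_zsmul, star_one]
      _ = (q.den : ℝ) • ((q:ℝ) • (1:A)) := by rw [smul_smul, hmul]
  have hf : Continuous (fun r : ℝ => star (r • (1:A))) :=
    continuous_star.comp (continuous_id.smul continuous_const)
  have hg : Continuous (fun r : ℝ => r • (1:A)) :=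
    continuous_id.smul continuous_const
  have := DenseRange.equalizer Rat.denseRange_cast hf hg (funext hq)
  exact congrFun this r

lemma star_real_smul (r : ℝ) (x : A) : star (r • x) = r • star x := by
  rw [show r • x = (r • (1:A)) * x by rw [smul_mul_assoc, one_mul], star_mul,
    star_real_smul_one, mul_smul_comm, mul_one]

lemma star_I_smul_one : star (Complex.I • (1:A)) = -(Complex.I • (1:A)) := by
  set i1 : A := Complex.I • 1 with hi1
  have hc : ∀ x : A, i1 * x = x * i1 := by
    intro x; rw [hi1, smul_mul_assoc, one_mul, mul_smul_comm, mul_one]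
  set j := star i1 with hj
  have hjc : ∀ x : A, j * x = x * j := by
    intro x
    have h := congrArg star (hc (star x))
    rw [star_mul, star_mul, star_star] at h
    exact h.symm
  have hi1sq : i1 * i1 = -1 := by
    rw [hi1, smul_mul_assoc, one_mul, smul_smul, Complex.I_mul_I, neg_smul, one_smul]
  have hjsq : j * j = -1 := by
    rw [hj, ← star_mul, hi1sq, star_neg, star_one]
  set h : A := i1 * j with hh
  have hh_star : star h = h := by
    rw [hh, star_mul, star_star, ← hj]
  have hh2 : h * h = 1 := by
    calc h * h = i1 * (j * i1) * j := by rw [hh]; noncomm_ring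
      _ = i1 * i1 * (j * j) := by rw [hjc]; noncomm_ring
      _ = 1 := by rw [hi1sq, hjsq]; simp
  set q : A := (2:ℝ)⁻¹ • (1 - h) with hqdef
  have hq_sa : star q = q := by
    rw [hqdef, star_real_smul, star_sub, star_one, hh_star]
  have hq_idem : q * q = q := by
    have e : (1 - h) * (1 - h) = (2:ℝ) • (1 - h) := by
      rw [mul_sub, sub_mul, sub_mul, hh2, two_smul]
      simp only [one_mul, mul_one]
      abel
    rw [hqdef, smul_mul_smul_comm, e, smul_smul]
    norm_num
  have hq_nonneg : 0 ≤ q := by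
    calc (0:A) ≤ star q * q := star_mul_self_nonneg q
      _ = q := by rw [hq_sa, hq_idem]
  have hqh : q * h = -q := by
    rw [hqdef, smul_mul_assoc, sub_mul, one_mul, hh2, ← smul_neg, neg_sub]
  have hneg_nonneg : 0 ≤ -q := by
    have key : star (i1 * q) * (i1 * q) = -q := by
      calc star (i1 * q) * (i1 * q) = (star q * j) * (i1 * q) := by rw [star_mul, ← hj]
        _ = star q * (j * i1) * q := by noncomm_ring
        _ = star q * (i1 * j) * q := by rw [hjc]
        _ = q * h * q := by rw [hq_sa, hh]
        _ = (-q) * q := by rw [hqh]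
        _ = -q := by rw [neg_mul, hq_idem]
    rw [← key]; exact star_mul_self_nonneg _
  have hq0 : q = 0 := le_antisymm (by simpa using neg_nonneg.mp hneg_nonneg) hq_nonneg
  have hh1 : h = 1 := by
    have h0 : (1:A) - h = 0 := by
      have := hq0
      rw [hqdef, smul_eq_zero] at this
      rcases this with h' | h'
      · norm_num at h'
      · exact h'
    exact (sub_eq_zero.mp h0).symm
  have : i1 * (i1 * j) = i1 * 1 := by rw [← hh, hh1]
  rw [← mul_assoc, hi1sq, mul_one, neg_one_mul] at this
  rw [← this, neg_neg]

lemma cstarStarModule : StarModule ℂ A := by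
  have hw : ∀ w : ℂ, w • (1:A) = w.re • (1:A) + w.im • (Complex.I • (1:A)) := by
    intro w
    rw [← Complex.coe_smul, ← Complex.coe_smul, smul_smul, ← add_smul, Complex.re_add_im]
  have h1 : ∀ w : ℂ, star (w • (1:A)) = (starRingEnd ℂ w) • (1:A) := by
    intro w
    rw [hw w, star_add, star_real_smul, star_real_smul, star_one, star_I_smul_one,
      hw (starRingEnd ℂ w), Complex.conj_re, Complex.conj_im]
    rw [smul_neg, neg_smul]
  constructor
  intro z x
  calc star (z • x) = star ((z • (1:A)) * x) := by rw [smul_mul_assoc, one_mul]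
    _ = star x * ((starRingEnd ℂ z) • (1:A)) := by rw [star_mul, h1]
    _ = (starRingEnd ℂ z) • star x := by rw [mul_smul_comm, mul_one]

section
variable [CompleteSpace A]
lemma cstar_norm_mono {b c : A} (hb : 0 ≤ b) (hbc : b ≤ c) : ‖b‖ ≤ ‖c‖ := by
  letI : StarModule ℂ A := cstarStarModule
  letI : CStarAlgebra A := {}
  exact CStarAlgebra.norm_le_norm_of_nonneg_of_le hb hbc
end

/-- A Kannan-type mapping with central positive coefficient of norm less than 1/2 is
orbitally continuous. -/
theorem kannan_type_orbitallyContinuous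
    (M : CStarMetric X A) (T : X → X)
    (a : A) (ha_pos : 0 ≤ a) (ha_comm : ∀ b : A, a * b = b * a) (ha_norm : ‖a‖ < 1 / 2)
    (hT : ∀ x y : X, M.d (T x) (T y) ≤ a * (M.d x (T x) + M.d y (T y))) :
    OrbCont M T := by
  intro u x k hk hconv
  have mono : ∀ {b c : A}, 0 ≤ b → b ≤ c → ‖b‖ ≤ ‖c‖ := fun hb hbc => cstar_norm_mono hb hbc
  set D : ℕ → A := fun n => M.d (T^[n] x) (T^[n+1] x) with hD
  have hDn : ∀ n, D n = M.d (T^[n] x) (T^[n+1] x) := fun n => rfl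
  have ha0 : (0:ℝ) ≤ ‖a‖ := norm_nonneg a
  have h1a : (0:ℝ) < 1 - ‖a‖ := by linarith
  set r : ℝ := ‖a‖ / (1 - ‖a‖) with hr
  have hr0 : 0 ≤ r := div_nonneg ha0 h1a.le
  have hr1 : r < 1 := by rw [hr, div_lt_one h1a]; linarith
  have hstep : ∀ n, ‖D (n+1)‖ ≤ r * ‖D n‖ := by
    intro n
    have h1 : D (n+1) ≤ a * (D n + D (n+1)) := by
      have h := hT (T^[n] x) (T^[n+1] x)
      rw [← Function.iterate_succ_apply' T n x, ← Function.iterate_succ_apply' T (n+1) x] at h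
      simp only [hDn]
      exact h
    have h2 : ‖D (n+1)‖ ≤ ‖a‖ * (‖D n‖ + ‖D (n+1)‖) := by
      calc ‖D (n+1)‖ ≤ ‖a * (D n + D (n+1))‖ := by
            refine mono ?_ h1
            rw [hDn]; exact M.nonneg _ _
        _ ≤ ‖a‖ * ‖D n + D (n+1)‖ := norm_mul_le _ _
        _ ≤ ‖a‖ * (‖D n‖ + ‖D (n+1)‖) := mul_le_mul_of_nonneg_left (norm_add_le _ _) ha0
    rw [hr, div_mul_eq_mul_div, le_div_iff₀ h1a]
    nlinarith [norm_nonneg (D (n+1))]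
  have hgeom : ∀ n, ‖D n‖ ≤ r ^ n * ‖D 0‖ := by
    intro n; induction n with
    | zero => simp
    | succ m ih =>
      calc ‖D (m+1)‖ ≤ r * ‖D m‖ := hstep m
        _ ≤ r * (r ^ m * ‖D 0‖) := mul_le_mul_of_nonneg_left ih hr0
        _ = r ^ (m+1) * ‖D 0‖ := by ring
  have hDlim : Tendsto (fun n => ‖D n‖) atTop (𝓝 0) := by
    have h := (tendsto_pow_atTop_nhds_zero_of_lt_one hr0 hr1).mul_const ‖D 0‖
    rw [zero_mul] at h
    exact squeeze_zero (fun n => norm_nonneg _) hgeom h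
  have hktop : Tendsto k atTop atTop := hk.tendsto_atTop
  -- `u` is a fixed point in norm
  have hfix : ‖M.d u (T u)‖ = 0 := by
    have hTd : ∀ i, 1 ≤ k i →
        M.d (T^[k i] x) (T u) ≤ a * (D (k i - 1) + M.d u (T u)) := by
      intro i hki
      have h := hT (T^[k i - 1] x) u
      have e1 : T (T^[k i - 1] x) = T^[k i] x := by
        conv_rhs => rw [show k i = (k i - 1) + 1 by omega]
        rw [Function.iterate_succ_apply']
      rw [e1] at h
      have e2 : k i - 1 + 1 = k i := by omega
      rw [hDn, e2]
      exact h
    have bound : ∀ i, 1 ≤ k i →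
        ‖M.d u (T u)‖ ≤ ‖M.d (T^[k i] x) u‖ + ‖a‖ * (‖D (k i - 1)‖ + ‖M.d u (T u)‖) := by
      intro i hki
      have tri : M.d u (T u) ≤ M.d u (T^[k i] x) + M.d (T^[k i] x) (T u) := M.triangle _ _ _
      calc ‖M.d u (T u)‖ ≤ ‖M.d u (T^[k i] x) + M.d (T^[k i] x) (T u)‖ :=
            mono (M.nonneg _ _) tri
        _ ≤ ‖M.d u (T^[k i] x)‖ + ‖M.d (T^[k i] x) (T u)‖ := norm_add_le _ _
        _ ≤ ‖M.d (T^[k i] x) u‖ + ‖a‖ * (‖D (k i - 1)‖ + ‖M.d u (T u)‖) := by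
            gcongr
            · rw [M.symm]
            · calc ‖M.d (T^[k i] x) (T u)‖ ≤ ‖a * (D (k i - 1) + M.d u (T u))‖ :=
                    mono (M.nonneg _ _) (hTd i hki)
                _ ≤ ‖a‖ * ‖D (k i - 1) + M.d u (T u)‖ := norm_mul_le _ _
                _ ≤ ‖a‖ * (‖D (k i - 1)‖ + ‖M.d u (T u)‖) :=
                    mul_le_mul_of_nonneg_left (norm_add_le _ _) ha0
    have t2 : Tendsto (fun i => ‖D (k i - 1)‖) atTop (𝓝 0) :=
      hDlim.comp ((tendsto_sub_atTop_nat 1).comp hktop)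
    have total : Tendsto
        (fun i => ‖M.d (T^[k i] x) u‖ + ‖a‖ * (‖D (k i - 1)‖ + ‖M.d u (T u)‖)) atTop
        (𝓝 (0 + ‖a‖ * (0 + ‖M.d u (T u)‖))) :=
      hconv.add (((t2.add tendsto_const_nhds)).const_mul ‖a‖)
    rw [show (0:ℝ) + ‖a‖ * (0 + ‖M.d u (T u)‖) = ‖a‖ * ‖M.d u (T u)‖ by ring] at total
    have hle : ‖M.d u (T u)‖ ≤ ‖a‖ * ‖M.d u (T u)‖ := by
      refine ge_of_tendsto total ?_
      filter_upwards [eventually_ge_atTop 1] with i hi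
      exact bound i (le_trans hi (hk.le_apply))
    have : ‖M.d u (T u)‖ ≤ 0 := by nlinarith [norm_nonneg (M.d u (T u))]
    exact le_antisymm this (norm_nonneg _)
  -- conclusion
  have hub : ∀ i, ‖M.d (T^[k i + 1] x) (T u)‖ ≤ ‖a‖ * ‖D (k i)‖ := by
    intro i
    have h := hT (T^[k i] x) u
    rw [← Function.iterate_succ_apply' T (k i) x] at h
    calc ‖M.d (T^[k i + 1] x) (T u)‖
        ≤ ‖a * (D (k i) + M.d u (T u))‖ := by
          refine mono (M.nonneg _ _) ?_
          rw [hDn]; exact h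
      _ ≤ ‖a‖ * ‖D (k i) + M.d u (T u)‖ := norm_mul_le _ _
      _ ≤ ‖a‖ * (‖D (k i)‖ + ‖M.d u (T u)‖) := mul_le_mul_of_nonneg_left (norm_add_le _ _) ha0
      _ = ‖a‖ * ‖D (k i)‖ := by rw [hfix, add_zero]
  have hlim : Tendsto (fun i => ‖a‖ * ‖D (k i)‖) atTop (𝓝 0) := by
    have h := (hDlim.comp hktop).const_mul ‖a‖
    rw [mul_zero] at h
    exact h
  exact squeeze_zero (fun i => norm_nonneg _) hub hlim
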